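/- arXiv:1206.2963 — 7 statements merged into one kernel-verified Lean document; each statement's English description precedes it below -/
import Mathlib

section
/- Let X be a complete real inner product space, let F : X → X be an affine isometry (F x = U x + v with U a surjective linear isometry and v ∈ X), and let C ⊆ X be a nonempty closed convex subset with F '' C = C. Then inf { ‖F x − x‖ : x ∈ C } = min(F), and a point x ∈ C satisfies ‖F x − x‖ = inf { ‖F y − y‖ : y ∈ C } if and only if x ∈ Min(F); in other words Min(F|_C) = Min(F) ∩ C. In particular, if the infimum over C is attained at some point of C, then Min(F) ≠ ∅. -/
/-!
Averaging an orbit moves a point of `C` towards the minimal displacement. For `x ∈ C` the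
mean `mₙ = (x + F x + ⋯ + F^[n-1] x) / n` lies in `C` by convexity and invariance, and since
`F` is affine its displacement telescopes: `F mₙ - mₙ = (F^[n] x - x) / n`. Comparing the orbit
of `x` with that of an arbitrary `y` through the isometry `F^[n]` gives
`‖F^[n] x - x‖ ≤ n ‖F y - y‖ + 2 ‖x - y‖`, so `‖F mₙ - mₙ‖ ≤ ‖F y - y‖ + 2 ‖x - y‖ / n`.
Hence the infimum of the displacement over `C` is the global one.
-/

open Set Finset Filter

theorem AffineMap.map_sum_smul {k V W : Type*} [Ring k] [AddCommGroup V] [Module k V]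
    [AddCommGroup W] [Module k W] (F : V →ᵃ[k] W) {ι : Type*} {s : Finset ι} {w : ι → k}
    (hw : ∑ i ∈ s, w i = 1) (p : ι → V) :
    F (∑ i ∈ s, w i • p i) = ∑ i ∈ s, w i • F (p i) := by
  rw [← s.affineCombination_eq_linear_combination p w hw, s.map_affineCombination p w hw,
    s.affineCombination_eq_linear_combination _ w hw]
  rfl

theorem LipschitzWith.dist_iterate_self_le_mul {α : Type*} [PseudoMetricSpace α] {f : α → α}
    (hf : LipschitzWith 1 f) (x : α) (n : ℕ) : dist (f^[n] x) x ≤ n * dist (f x) x := by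
  rw [dist_comm]
  calc dist x (f^[n] x) ≤ ∑ i ∈ range n, dist (f^[i] x) (f^[i + 1] x) :=
        dist_le_range_sum_dist (fun i => f^[i] x) n
    _ ≤ ∑ _i ∈ range n, dist x (f x) := by
        gcongr with i
        simpa using hf.dist_iterate_succ_le_geometric x i
    _ = n * dist (f x) x := by rw [sum_const, card_range, nsmul_eq_mul, dist_comm]

theorem LipschitzWith.dist_iterate_self_le_add {α : Type*} [PseudoMetricSpace α] {f : α → α}
    (hf : LipschitzWith 1 f) (x y : α) (n : ℕ) :
    dist (f^[n] x) x ≤ n * dist (f y) y + 2 * dist x y := by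
  have hxy : dist (f^[n] x) (f^[n] y) ≤ dist x y := by
    simpa using (hf.iterate n).dist_le_mul x y
  have hy := hf.dist_iterate_self_le_mul y n
  have := dist_triangle4 (f^[n] x) (f^[n] y) y x
  rw [dist_comm y x] at this
  linarith

section OrbitMean

variable {X : Type*} [SeminormedAddCommGroup X] [NormedSpace ℝ X]

noncomputable def orbitMean (F : X → X) (x : X) (n : ℕ) : X :=
  (n : ℝ)⁻¹ • ∑ k ∈ range n, F^[k] x

theorem Convex.orbitMean_mem {C : Set X} (hC : Convex ℝ C) {F : X → X} (hF : MapsTo F C C)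
    {x : X} (hx : x ∈ C) {n : ℕ} (hn : n ≠ 0) : orbitMean F x n ∈ C := by
  rw [orbitMean, smul_sum]
  refine hC.sum_mem (fun _ _ => by positivity) ?_ fun k _ => hF.iterate k hx
  rw [sum_const, card_range, nsmul_eq_mul]
  exact mul_inv_cancel₀ (Nat.cast_ne_zero.mpr hn)

theorem AffineMap.apply_orbitMean_sub (F : X →ᵃ[ℝ] X) (x : X) {n : ℕ} (hn : n ≠ 0) :
    F (orbitMean F x n) - orbitMean F x n = (n : ℝ)⁻¹ • (F^[n] x - x) := by
  have hw : ∑ _k ∈ range n, (n : ℝ)⁻¹ = 1 := by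
    rw [sum_const, card_range, nsmul_eq_mul]
    exact mul_inv_cancel₀ (Nat.cast_ne_zero.mpr hn)
  rw [orbitMean, smul_sum, F.map_sum_smul hw, ← smul_sum, ← smul_sum, ← smul_sub,
    ← sum_sub_distrib]
  congr 1
  simpa only [Function.iterate_succ_apply', Function.iterate_zero_apply] using
    sum_range_sub (fun k => F^[k] x) n

theorem AffineIsometry.dist_apply_orbitMean_le (F : X →ᵃⁱ[ℝ] X) (x y : X) {n : ℕ}
    (hn : n ≠ 0) :
    dist (F (orbitMean F x n)) (orbitMean F x n) ≤ dist (F y) y + 2 * dist x y / n := by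
  have hn' : (0 : ℝ) < n := Nat.cast_pos.mpr (Nat.pos_of_ne_zero hn)
  have hmean : dist (F (orbitMean F x n)) (orbitMean F x n) = (n : ℝ)⁻¹ * dist (F^[n] x) x := by
    rw [dist_eq_norm, dist_eq_norm, ← F.coe_toAffineMap, F.toAffineMap.apply_orbitMean_sub x hn,
      norm_smul, Real.norm_of_nonneg (inv_nonneg.mpr hn'.le)]
  calc dist (F (orbitMean F x n)) (orbitMean F x n)
      ≤ (n : ℝ)⁻¹ * (n * dist (F y) y + 2 * dist x y) := by
        rw [hmean]
        exact mul_le_mul_of_nonneg_left (F.isometry.lipschitz.dist_iterate_self_le_add x y n) (by positivity)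
    _ = dist (F y) y + 2 * dist x y / n := by field_simp

theorem AffineIsometry.iInf_dist_apply_self_le_of_mapsTo (F : X →ᵃⁱ[ℝ] X) {C : Set X}
    (hC : Convex ℝ C) (hF : MapsTo F C C) {x : X} (hx : x ∈ C) (y : X) :
    ⨅ c : C, dist (F c) c ≤ dist (F y) y := by
  have hbdd : BddBelow (range fun c : C => dist (F c) c) :=
    ⟨0, by rintro _ ⟨c, rfl⟩; exact dist_nonneg⟩
  have hbound : ∀ᶠ n : ℕ in atTop, ⨅ c : C, dist (F c) c ≤ dist (F y) y + 2 * dist x y / n := by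
    filter_upwards [eventually_ne_atTop 0] with n hn
    exact (ciInf_le hbdd ⟨_, hC.orbitMean_mem hF hx hn⟩).trans
      (F.dist_apply_orbitMean_le x y hn)
  refine ge_of_tendsto ?_ hbound
  simpa using (tendsto_const_div_atTop_nhds_zero_nat (2 * dist x y)).const_add (dist (F y) y)

theorem AffineIsometry.iInf_subtype_dist_apply_self_eq (F : X →ᵃⁱ[ℝ] X) {C : Set X}
    (hC : Convex ℝ C) (hF : MapsTo F C C) (hne : C.Nonempty) :
    ⨅ c : C, dist (F c) c = ⨅ x, dist (F x) x := by
  obtain ⟨x, hx⟩ := hne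
  have : Nonempty C := ⟨⟨x, hx⟩⟩
  refine le_antisymm (le_ciInf (F.iInf_dist_apply_self_le_of_mapsTo hC hF hx)) ?_
  exact le_ciInf fun c => ciInf_le ⟨0, by rintro _ ⟨y, rfl⟩; exact dist_nonneg⟩ (c : X)

end OrbitMean

theorem minSet_inter_invariant_convex_general
    {X : Type*} [NormedAddCommGroup X] [InnerProductSpace ℝ X]
    (U : X →ₗᵢ[ℝ] X) (v : X)
    (C : Set X) (hne : C.Nonempty) (hconv : Convex ℝ C)
    (hFC : (fun x => U x + v) '' C = C) :
    (⨅ x : C, ‖(U x + v) - (x : X)‖) = (⨅ x : X, ‖(U x + v) - x‖) ∧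
    (∀ x ∈ C, (‖(U x + v) - x‖ = ⨅ y : C, ‖(U y + v) - (y : X)‖ ↔
        ‖(U x + v) - x‖ = ⨅ y : X, ‖(U y + v) - y‖)) ∧
    ((∃ x ∈ C, ‖(U x + v) - x‖ = ⨅ y : C, ‖(U y + v) - (y : X)‖) →
      {x : X | ‖(U x + v) - x‖ = ⨅ y : X, ‖(U y + v) - y‖}.Nonempty) := by
  set F : X →ᵃⁱ[ℝ] X := (AffineIsometryEquiv.vaddConst ℝ v).toAffineIsometry.comp U.toAffineIsometry
  have hF : ∀ x, U x + v = F x := fun _ => rfl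
  have hmaps : MapsTo F C C := fun x hx => by rw [← hFC]; exact mem_image_of_mem _ hx
  have key := F.iInf_subtype_dist_apply_self_eq hconv hmaps hne
  simp only [hF, ← dist_eq_norm]
  exact ⟨key, fun x _ => by rw [key], fun ⟨x, _, hx⟩ => ⟨x, key ▸ hx⟩⟩

/-- Let `F x = U x + v` be an affine isometry of a complete real inner product
space `X` (`U` a surjective linear isometry) and let `C` be a nonempty closed
convex `F`-invariant subset.  Then the infimum of the displacement over `C`
equals `min F`, a point of `C` minimizes the displacement over `C` iff it lies
in `Min F` (so `Min (F|_C) = Min F ∩ C`), and if the infimum over `C` is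
attained then `Min F` is nonempty. -/
theorem minSet_inter_invariant_convex
    {X : Type*} [NormedAddCommGroup X] [InnerProductSpace ℝ X] [CompleteSpace X]
    (U : X →ₗᵢ[ℝ] X) (hU : Function.Surjective U) (v : X)
    (C : Set X) (hne : C.Nonempty) (hcl : IsClosed C) (hconv : Convex ℝ C)
    (hFC : (fun x => U x + v) '' C = C) :
    (⨅ x : C, ‖(U x + v) - (x : X)‖) = (⨅ x : X, ‖(U x + v) - x‖) ∧
    (∀ x ∈ C, (‖(U x + v) - x‖ = ⨅ y : C, ‖(U y + v) - (y : X)‖ ↔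
        ‖(U x + v) - x‖ = ⨅ y : X, ‖(U y + v) - y‖)) ∧
    ((∃ x ∈ C, ‖(U x + v) - x‖ = ⨅ y : C, ‖(U y + v) - (y : X)‖) →
      {x : X | ‖(U x + v) - x‖ = ⨅ y : X, ‖(U y + v) - y‖}.Nonempty) :=
  minSet_inter_invariant_convex_general U v C hne hconv hFC
end

section
/- Let V be a finite-dimensional real inner product space, let F : V → V be the affine isometry F x = U x + v (U a linear isometry of V, v ∈ V), and let v₀ be the orthogonal projection of v onto the fixed subspace ker(U − id). Then Min(F) = { x ∈ V : F x − x = v₀ }, this set is nonempty (so F is semisimple), min(F) = ‖v₀‖, Min(F) = x₀ + ker(U − id) for any x₀ ∈ Min(F), and F restricted to Min(F) is the translation x ↦ x + v₀. -/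
/-- Let `F x = U x + v` be an affine isometry of a finite-dimensional real
inner product space `V`, `K = ker (U - id)` the fixed subspace of the linear
part, and `v₀` the orthogonal projection of `v` onto `K`.  Then
`Min F = {x | F x - x = v₀}`, this set is nonempty, `min F = ‖v₀‖`,
`Min F = x₀ + K` for any `x₀ ∈ Min F`, and `F` restricted to `Min F` is the
translation by `v₀`. -/
theorem minSet_affine_isometry_finiteDimensional
    {V : Type*} [NormedAddCommGroup V] [InnerProductSpace ℝ V]
    [FiniteDimensional ℝ V]
    (U : V →ₗᵢ[ℝ] V) (v : V)
    (K : Submodule ℝ V) (hK : K = LinearMap.ker (U.toLinearMap - LinearMap.id))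
    (v₀ : V) (hv₀ : v₀ = Submodule.orthogonalProjection K v) :
    {x : V | dist x (U x + v) = ⨅ y : V, dist y (U y + v)} =
        {x : V | (U x + v) - x = v₀} ∧
    {x : V | dist x (U x + v) = ⨅ y : V, dist y (U y + v)}.Nonempty ∧
    (⨅ y : V, dist y (U y + v)) = ‖v₀‖ ∧
    (∀ x₀ ∈ {x : V | dist x (U x + v) = ⨅ y : V, dist y (U y + v)},
      {x : V | dist x (U x + v) = ⨅ y : V, dist y (U y + v)} =
        {x : V | x - x₀ ∈ K}) ∧
    (∀ x ∈ {x : V | dist x (U x + v) = ⨅ y : V, dist y (U y + v)},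
      U x + v = x + v₀) := by
  set T : V →ₗ[ℝ] V := U.toLinearMap - LinearMap.id with hT
  have hTapp : ∀ x, T x = U x - x := fun x => rfl
  have hmemK : ∀ y, y ∈ K ↔ U y = y := by
    intro y
    rw [hK, LinearMap.mem_ker, LinearMap.sub_apply, LinearMap.id_apply, sub_eq_zero]
    rfl
  -- range T = Kᗮ
  have hle : LinearMap.range T ≤ Kᗮ := by
    rintro _ ⟨x, rfl⟩
    rw [Submodule.mem_orthogonal]
    intro u hu
    rw [hTapp, inner_sub_right]
    have : (inner ℝ u (U x) : ℝ) = inner ℝ u x := by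
      conv_lhs => rw [← ((hmemK u).1 hu)]
      exact U.inner_map_map u x
    rw [this, sub_self]
  have hrange : LinearMap.range T = Kᗮ := by
    apply Submodule.eq_of_le_of_finrank_eq hle
    have h1 := LinearMap.finrank_range_add_finrank_ker T
    have h2 := Submodule.finrank_add_finrank_orthogonal K
    rw [← hK] at h1
    omega
  have hv₀K : v₀ ∈ K := hv₀ ▸ (Submodule.orthogonalProjection K v).2
  have hv₁ : v - v₀ ∈ Kᗮ := by rw [hv₀]; exact K.sub_starProjection_mem_orthogonal v
  -- existence of a minimizer
  obtain ⟨x₀, hx₀⟩ : ∃ x₀, T x₀ = -(v - v₀) := by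
    have : -(v - v₀) ∈ LinearMap.range T := hrange ▸ Kᗮ.neg_mem hv₁
    exact this
  have hx₀' : U x₀ + v - x₀ = v₀ := by
    have := hTapp x₀ ▸ hx₀
    have h2 : U x₀ - x₀ = v₀ - v := by rw [this]; abel
    rw [add_sub_right_comm, h2]; abel
  -- key decomposition
  have hdecomp : ∀ x : V, U x + v - x = (T x + (v - v₀)) + v₀ := by
    intro x; rw [hTapp]; abel
  have hperp : ∀ x : V, T x + (v - v₀) ∈ Kᗮ :=
    fun x => Kᗮ.add_mem (hrange ▸ LinearMap.mem_range_self T x) hv₁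
  have hsq : ∀ x : V, ‖U x + v - x‖ ^ 2 = ‖T x + (v - v₀)‖ ^ 2 + ‖v₀‖ ^ 2 := by
    intro x
    rw [hdecomp x, norm_add_sq_real]
    have : (inner ℝ (T x + (v - v₀)) v₀ : ℝ) = 0 :=
      (Submodule.mem_orthogonal' K _).1 (hperp x) v₀ hv₀K
    rw [this]; ring
  have hdist : ∀ x : V, dist x (U x + v) = ‖U x + v - x‖ := by
    intro x; rw [dist_eq_norm, ← norm_neg]; congr 1; abel
  have hlower : ∀ x : V, ‖v₀‖ ≤ dist x (U x + v) := by
    intro x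
    rw [hdist x]
    have h := hsq x
    nlinarith [norm_nonneg (U x + v - x), norm_nonneg v₀, sq_nonneg (‖T x + (v - v₀)‖)]
  have hx₀dist : dist x₀ (U x₀ + v) = ‖v₀‖ := by rw [hdist, hx₀']
  have hinf : (⨅ y : V, dist y (U y + v)) = ‖v₀‖ := by
    apply le_antisymm
    · exact hx₀dist ▸ ciInf_le ⟨0, fun _ ⟨y, hy⟩ => hy ▸ dist_nonneg⟩ x₀
    · exact le_ciInf hlower
  -- equality characterization
  have hchar : ∀ x : V, dist x (U x + v) = (⨅ y : V, dist y (U y + v)) ↔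
      U x + v - x = v₀ := by
    intro x
    rw [hinf, hdist]
    constructor
    · intro h
      have h2 := hsq x
      rw [h] at h2
      have h3 : ‖T x + (v - v₀)‖ = 0 := by nlinarith [norm_nonneg (T x + (v - v₀))]
      have h4 : T x + (v - v₀) = 0 := norm_eq_zero.mp h3
      rw [hdecomp x, h4, zero_add]
    · intro h; rw [h]
  have hsetEq : {x : V | dist x (U x + v) = ⨅ y : V, dist y (U y + v)} =
      {x : V | (U x + v) - x = v₀} := Set.ext fun x => hchar x
  refine ⟨hsetEq, ⟨x₀, by rw [Set.mem_setOf_eq, hx₀dist, hinf]⟩, hinf, ?_, ?_⟩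
  · intro y₀ hy₀
    rw [hsetEq] at hy₀ ⊢
    ext x
    simp only [Set.mem_setOf_eq] at *
    rw [hmemK]
    constructor
    · intro hx
      have : U x - x = U y₀ - y₀ := by
        have h1 : U x - x = v₀ - v := by rw [← hx]; abel
        have h2 : U y₀ - y₀ = v₀ - v := by rw [← hy₀]; abel
        rw [h1, h2]
      have := sub_eq_sub_iff_sub_eq_sub.mp this
      rw [← map_sub U x y₀] at this
      exact this
    · intro hx
      have h1 : U (x - y₀) = x - y₀ := hx
      rw [map_sub] at h1
      have h2 : U x - x = U y₀ - y₀ := sub_eq_sub_iff_sub_eq_sub.mp h1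
      have h3 : U x + v - x = U y₀ + v - y₀ := by
        rw [add_sub_right_comm, h2, add_sub_right_comm]
      rw [h3, hy₀]
  · intro x hx
    rw [hsetEq] at hx
    rw [← hx]; abel
end

section
/- Let V be a finite-dimensional real inner product space and let F : V → V be an affine isometry (F x = U x + v with U a linear isometry of V and v ∈ V). Then for every integer s ≥ 1, the iterate F^s satisfies min(F^s) = s · min(F) and Min(F) ⊆ Min(F^s). -/
/-!
Averaging the first `s` points of an orbit of an affine map `F` gives a point `y` whose
displacement `F y - y` is `(F^[s] x - x) / s`, since the sum telescopes; hence
`s * min F ≤ dist x (F^[s] x)` for every `x`. Conversely, `F` being an isometry, the triangle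
inequality along the orbit gives `dist x (F^[s] x) ≤ s * dist x (F x)`, so `min (F^s) = s * min F`
and the bound is attained at every point of `Min F`.
-/

open Finset

section MetricSpace

variable {α : Type*} [PseudoMetricSpace α]

noncomputable def minDisplacement (F : α → α) : ℝ := ⨅ x, dist x (F x)

def minSet (F : α → α) : Set α := {x | dist x (F x) = minDisplacement F}

lemma minDisplacement_le (F : α → α) (x : α) : minDisplacement F ≤ dist x (F x) :=
  ciInf_le ⟨0, by rintro _ ⟨y, rfl⟩; exact dist_nonneg⟩ x

lemma dist_iterate_le_mul_dist {F : α → α} (hF : LipschitzWith 1 F) (n : ℕ) (x : α) :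
    dist x (F^[n] x) ≤ n * dist x (F x) := by
  have hstep (k : ℕ) : dist (F^[k] x) (F^[k + 1] x) ≤ dist x (F x) := by
    simpa [Function.iterate_succ_apply] using (hF.iterate k).dist_le_mul x (F x)
  calc dist x (F^[n] x) ≤ ∑ k ∈ range n, dist (F^[k] x) (F^[k + 1] x) :=
        dist_le_range_sum_dist (fun k => F^[k] x) n
    _ ≤ ∑ _k ∈ range n, dist x (F x) := sum_le_sum fun k _ => hstep k
    _ = n * dist x (F x) := by rw [sum_const, card_range, nsmul_eq_mul]

lemma minDisplacement_iterate_le [Nonempty α] {F : α → α} (hF : LipschitzWith 1 F) (n : ℕ) :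
    minDisplacement F^[n] ≤ n * minDisplacement F := by
  rw [minDisplacement, minDisplacement, Real.mul_iInf_of_nonneg n.cast_nonneg]
  exact le_ciInf fun x => (minDisplacement_le _ x).trans (dist_iterate_le_mul_dist hF n x)

lemma minDisplacement_iterate_eq [Nonempty α] {F : α → α} (hF : LipschitzWith 1 F) {n : ℕ}
    (hlower : ∀ x, n * minDisplacement F ≤ dist x (F^[n] x)) :
    minDisplacement F^[n] = n * minDisplacement F :=
  (minDisplacement_iterate_le hF n).antisymm (le_ciInf hlower)

lemma minSet_subset_minSet_iterate {F : α → α} (hF : LipschitzWith 1 F) {n : ℕ}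
    (hmin : minDisplacement F^[n] = n * minDisplacement F) : minSet F ⊆ minSet F^[n] := by
  intro x hx
  refine (minDisplacement_le _ x).antisymm' ?_
  calc dist x (F^[n] x) ≤ n * dist x (F x) := dist_iterate_le_mul_dist hF n x
    _ = minDisplacement F^[n] := by rw [hx, hmin]

end MetricSpace

section Affine

variable {E : Type*} [SeminormedAddCommGroup E] [NormedSpace ℝ E]

noncomputable def orbitAverage (F : E → E) (n : ℕ) (x : E) : E := (n : ℝ)⁻¹ • ∑ k ∈ range n, F^[k] x

lemma map_orbitAverage {F : E → E} {L : E →ₗ[ℝ] E} {v : E} (hF : ∀ y, F y = L y + v) {n : ℕ}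
    (hn : n ≠ 0) (x : E) : F (orbitAverage F n x) = (n : ℝ)⁻¹ • ∑ k ∈ range n, F^[k + 1] x := by
  have hv : (n : ℝ)⁻¹ • (n • v) = v := by
    rw [← Nat.cast_smul_eq_nsmul ℝ, smul_smul, inv_mul_cancel₀ (Nat.cast_ne_zero.2 hn), one_smul]
  simp only [Function.iterate_succ_apply', hF, orbitAverage, map_smul, map_sum, sum_add_distrib,
    sum_const, card_range, smul_add, hv]

lemma map_orbitAverage_sub {F : E → E} {L : E →ₗ[ℝ] E} {v : E} (hF : ∀ y, F y = L y + v) {n : ℕ}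
    (hn : n ≠ 0) (x : E) :
    F (orbitAverage F n x) - orbitAverage F n x = (n : ℝ)⁻¹ • (F^[n] x - x) := by
  rw [map_orbitAverage hF hn, orbitAverage, ← smul_sub, ← sum_sub_distrib,
    sum_range_sub (fun k => F^[k] x), Function.iterate_zero_apply]

lemma mul_minDisplacement_le_dist_iterate {F : E → E} {L : E →ₗ[ℝ] E} {v : E}
    (hF : ∀ y, F y = L y + v) (n : ℕ) (x : E) : n * minDisplacement F ≤ dist x (F^[n] x) := by
  rcases eq_or_ne n 0 with rfl | hn
  · simp
  have hpos : (0 : ℝ) < n := by positivity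
  have hdist : dist (orbitAverage F n x) (F (orbitAverage F n x)) = dist x (F^[n] x) / n := by
    rw [dist_comm, dist_comm x, dist_eq_norm, dist_eq_norm, map_orbitAverage_sub hF hn,
      norm_smul, norm_inv, Real.norm_natCast, inv_mul_eq_div]
  rw [← le_div_iff₀' hpos, ← hdist]
  exact minDisplacement_le F _

end Affine

theorem min_iterate_affine_isometry_general
    {V : Type*} [NormedAddCommGroup V] [InnerProductSpace ℝ V]
    (U : V →ₗᵢ[ℝ] V) (v : V) (s : ℕ) :
    (⨅ x : V, dist x ((fun y => U y + v)^[s] x)) =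
      (s : ℝ) * ⨅ x : V, dist x (U x + v) ∧
    {x : V | dist x (U x + v) = ⨅ y : V, dist y (U y + v)} ⊆
      {x : V | dist x ((fun y => U y + v)^[s] x) =
        ⨅ y : V, dist y ((fun z => U z + v)^[s] y)} := by
  set F : V → V := fun y => U y + v
  have hLip : LipschitzWith 1 F :=
    LipschitzWith.of_dist_le_mul fun x y => by simp [F, dist_add_right]
  have hmin : minDisplacement F^[s] = s * minDisplacement F :=
    minDisplacement_iterate_eq hLip
      (mul_minDisplacement_le_dist_iterate (L := U.toLinearMap) (v := v) (fun _ => rfl) s)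
  exact ⟨hmin, minSet_subset_minSet_iterate hLip hmin⟩

/-- For an affine isometry `F x = U x + v` of a finite-dimensional real inner
product space and any integer `s ≥ 1`, one has `min (F^s) = s * min F` and
`Min F ⊆ Min (F^s)`. -/
theorem min_iterate_affine_isometry
    {V : Type*} [NormedAddCommGroup V] [InnerProductSpace ℝ V]
    [FiniteDimensional ℝ V]
    (U : V →ₗᵢ[ℝ] V) (v : V) (s : ℕ) (hs : 1 ≤ s) :
    (⨅ x : V, dist x ((fun y => U y + v)^[s] x)) =
      (s : ℝ) * ⨅ x : V, dist x (U x + v) ∧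
    {x : V | dist x (U x + v) = ⨅ y : V, dist y (U y + v)} ⊆
      {x : V | dist x ((fun y => U y + v)^[s] x) =
        ⨅ y : V, dist y ((fun z => U z + v)^[s] y)} :=
  min_iterate_affine_isometry_general U v s
end

section
/- Let V be a finite-dimensional real inner product space, let F : V → V be an affine isometry (F x = U x + v with U a linear isometry of V and v ∈ V), suppose a := min(F) > 0, and let x ∈ Min(F). Then the linear part U fixes the displacement vector F x − x, and the map c : ℝ → V defined by c(t) = x + (t/a) · (F x − x) satisfies ‖c(s) − c(t)‖ = |s − t| for all s, t ∈ ℝ (i.e. c is an isometric embedding of ℝ, an axis of F) and F(c(t)) = c(t + a) for all t ∈ ℝ. -/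
/-! If `x` minimises the displacement of `F y = U y + v` and `w = F x - x`, then the midpoint
`m = x + w / 2` is displaced by `(w + U w) / 2`. Minimality gives `‖w‖ + ‖U w‖ ≤ ‖w + U w‖`, and
strict convexity of the norm forces `U w = w`. Hence `F (x + t • w) = x + (t + 1) • w`: the line
through `x` in direction `w` is translated by `F` along itself, by the distance `‖w‖ = min F`. -/

namespace LinearIsometry

variable {V : Type*} [NormedAddCommGroup V] [NormedSpace ℝ V] (U : V →ₗᵢ[ℝ] V) (v : V)

theorem map_add_smul_add_sub (x w : V) (t : ℝ) :
    U (x + t • w) + v - (x + t • w) = (U x + v - x) + t • (U w - w) := by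
  rw [map_add, map_smul, smul_sub]
  abel

theorem map_displacement_eq_of_forall_dist_le [StrictConvexSpace ℝ V] (x : V)
    (hx : ∀ y, dist x (U x + v) ≤ dist y (U y + v)) :
    U (U x + v - x) = U x + v - x := by
  set w := U x + v - x with hw
  have hmid : (2 : ℝ)⁻¹ • (w + U w) = U (x + (2 : ℝ)⁻¹ • w) + v - (x + (2 : ℝ)⁻¹ • w) := by
    rw [map_add_smul_add_sub, ← hw]
    module
  have hle : ‖w‖ ≤ 2⁻¹ * ‖w + U w‖ := by
    have := hx (x + (2 : ℝ)⁻¹ • w)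
    rwa [dist_comm, dist_eq_norm, dist_comm, dist_eq_norm, ← hmid, norm_smul,
      Real.norm_of_nonneg (by norm_num)] at this
  have hadd : ‖w + U w‖ = ‖w‖ + ‖U w‖ :=
    le_antisymm (norm_add_le _ _) (by rw [U.norm_map]; linarith)
  exact (eq_of_norm_eq_of_norm_add_eq (U.norm_map w).symm hadd).symm

theorem map_add_smul_add_of_map_eq (x : V) (hfix : U (U x + v - x) = U x + v - x)
    (t : ℝ) : U (x + t • (U x + v - x)) + v = x + (t + 1) • (U x + v - x) := by
  rw [map_add, map_smul, hfix, add_smul, one_smul]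
  abel

end LinearIsometry

theorem norm_add_smul_sub_add_smul {V : Type*} [SeminormedAddCommGroup V] [NormedSpace ℝ V]
    (x w : V) (s t : ℝ) : ‖(x + s • w) - (x + t • w)‖ = |s - t| * ‖w‖ := by
  rw [add_sub_add_left_eq_sub, ← sub_smul, norm_smul, Real.norm_eq_abs]

theorem axis_of_hyperbolic_affine_isometry_general
    {V : Type*} [NormedAddCommGroup V] [InnerProductSpace ℝ V]
    (U : V →ₗᵢ[ℝ] V) (v : V) (a : ℝ)
    (ha_def : a = ⨅ y : V, dist y (U y + v)) (ha : 0 < a)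
    (x : V) (hx : dist x (U x + v) = a) :
    U ((U x + v) - x) = (U x + v) - x ∧
    (∀ s t : ℝ, ‖(x + (s / a) • ((U x + v) - x)) -
        (x + (t / a) • ((U x + v) - x))‖ = |s - t|) ∧
    (∀ t : ℝ, U (x + (t / a) • ((U x + v) - x)) + v =
        x + ((t + a) / a) • ((U x + v) - x)) := by
  have hmin : ∀ y, dist x (U x + v) ≤ dist y (U y + v) := fun y => by
    rw [hx, ha_def]
    exact ciInf_le ⟨0, by rintro _ ⟨y, rfl⟩; exact dist_nonneg⟩ y
  have hfix := U.map_displacement_eq_of_forall_dist_le v x hmin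
  have hw : ‖U x + v - x‖ = a := by rw [← hx, dist_comm, dist_eq_norm]
  refine ⟨hfix, fun s t => ?_, fun t => ?_⟩
  · rw [norm_add_smul_sub_add_smul, hw, ← sub_div, abs_div, abs_of_pos ha,
      div_mul_cancel₀ _ ha.ne']
  · rw [U.map_add_smul_add_of_map_eq v x hfix, add_div, div_self ha.ne']

/-- Let `F x = U x + v` be an affine isometry of a finite-dimensional real
inner product space with `a = min F > 0`, and let `x ∈ Min F`.  Then the linear
part `U` fixes the displacement `F x - x`, and `c t = x + (t/a) • (F x - x)`
is a geodesic line (an axis) with `F (c t) = c (t + a)` for all `t`. -/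
theorem axis_of_hyperbolic_affine_isometry
    {V : Type*} [NormedAddCommGroup V] [InnerProductSpace ℝ V]
    [FiniteDimensional ℝ V]
    (U : V →ₗᵢ[ℝ] V) (v : V) (a : ℝ)
    (ha_def : a = ⨅ y : V, dist y (U y + v)) (ha : 0 < a)
    (x : V) (hx : dist x (U x + v) = a) :
    U ((U x + v) - x) = (U x + v) - x ∧
    (∀ s t : ℝ, ‖(x + (s / a) • ((U x + v) - x)) -
        (x + (t / a) • ((U x + v) - x))‖ = |s - t|) ∧
    (∀ t : ℝ, U (x + (t / a) • ((U x + v) - x)) + v =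
        x + ((t + a) / a) • ((U x + v) - x)) :=
  axis_of_hyperbolic_affine_isometry_general U v a ha_def ha x hx
end

section
/- Let V be a finite-dimensional real inner product space, let σ : V → V be a linear isometry, let r ≥ 1 be an integer with σ^r = id, let v ∈ V, and let F : V → V be the affine isometry F x = σ x + v. Then Min(F) is nonempty, and for every x ∈ V one has dist(x, F x) ≥ 2 · sin(π / r) · dist(x, Min(F)) (where dist(x, Min(F)) denotes the infimum of distances from x to points of Min(F)). -/
/-!
Put `A = σ - 1`, so that `dist x (σ x + v) = ‖A x + v‖`. Choosing `x₀` with `A x₀ + v ⊥ range A`,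
Pythagoras gives `‖A x + v‖² = ‖A (x - x₀)‖² + ‖A x₀ + v‖²`; hence `Min F = x₀ + ker A`, and the
bound reduces to `2 sin (π / r) ‖u‖ ≤ ‖σ u - u‖` for `u ⊥ ker A`.

For that, diagonalize the symmetric operator `σ + σ⁻¹ = σ + σ ^ (r - 1)`. On a unit eigenvector `w`
with `⟪σ w, w⟫ = cos φ`, the numbers `⟪σ ^ k w, w⟫` satisfy the Chebyshev recurrence, so they equal
`cos (k φ)`; then `σ ^ r = 1` forces `cos (r φ) = 1`, so either `σ w = w` or `φ ≥ 2π / r`. Summing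
over an eigenbasis gives `⟪σ u, u⟫ ≤ cos (2π / r) ‖u‖²`, and so
`‖σ u - u‖² = 2 ‖u‖² - 2 ⟪σ u, u⟫ ≥ (2 - 2 cos (2π / r)) ‖u‖² = 4 sin² (π / r) ‖u‖²`.
-/

open Real RealInnerProductSpace Polynomial.Chebyshev

namespace Polynomial.Chebyshev

lemma eval_T_eq_of_recurrence {R : Type*} [CommRing R] {a : ℕ → R} {c : R} (h₀ : a 0 = 1)
    (h₁ : a 1 = c) (h : ∀ k, a (k + 2) = 2 * c * a (k + 1) - a k) (k : ℕ) :
    a k = (T R k).eval c := by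
  induction k using Nat.twoStepInduction with
  | zero => simp [h₀]
  | one => simp [h₁]
  | more k ih₁ ih₂ =>
    rw [h, ih₁, ih₂]
    push_cast
    rw [T_add_two]
    simp only [eval_sub, eval_mul, eval_X, eval_ofNat]

lemma le_cos_two_pi_div_of_eval_T_eq_one {r : ℕ} (hr : 0 < r) {c : ℝ} (hc : c ∈ Set.Ico (-1) 1)
    (h : (T ℝ r).eval c = 1) : c ≤ cos (2 * π / r) := by
  obtain ⟨hc₀, hc₁⟩ := hc
  have hcos : cos (arccos c) = c := cos_arccos hc₀ hc₁.le
  rw [← hcos, T_real_cos, Int.cast_natCast] at h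
  obtain ⟨n, hn⟩ := (cos_eq_one_iff _).1 h
  have hr' : (0 : ℝ) < r := by exact_mod_cast hr
  have hφ : 0 < arccos c := arccos_pos.2 hc₁
  have hn₁ : (1 : ℝ) ≤ n := by
    have : (0 : ℝ) < n := by nlinarith [pi_pos, mul_pos hr' hφ]
    exact_mod_cast Int.cast_pos.1 this
  have : 2 * π / r ≤ arccos c := by
    rw [div_le_iff₀ hr']
    nlinarith [pi_pos]
  rw [← hcos]
  exact cos_le_cos_of_nonneg_of_le_pi (by positivity) (arccos_le_pi c) this

end Polynomial.Chebyshev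

lemma LinearMap.IsSymmetric.inner_apply_self_le_of_mem_orthogonal {V : Type*}
    [NormedAddCommGroup V] [InnerProductSpace ℝ V] [FiniteDimensional ℝ V] {T : V →ₗ[ℝ] V}
    (hT : T.IsSymmetric) {K : Submodule ℝ V} {c : ℝ}
    (hc : ∀ (μ : ℝ) (w : V), ‖w‖ = 1 → w ∉ K → T w = μ • w → μ ≤ c) {u : V} (hu : u ∈ Kᗮ) :
    ⟪T u, u⟫ ≤ c * ‖u‖ ^ 2 := by
  set e := hT.eigenvectorBasis rfl
  set μ := hT.eigenvalues rfl
  have hcoord : ∀ i, μ i * ⟪e i, u⟫ ^ 2 ≤ c * ⟪e i, u⟫ ^ 2 := by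
    intro i
    by_cases hi : e i ∈ K
    · simp [Submodule.inner_right_of_mem_orthogonal hi hu]
    · refine mul_le_mul_of_nonneg_right (hc _ _ (e.orthonormal.1 i) hi ?_) (sq_nonneg _)
      exact hT.apply_eigenvectorBasis rfl i
  calc ⟪T u, u⟫ = ∑ i, ⟪T u, e i⟫ * ⟪e i, u⟫ := (e.sum_inner_mul_inner _ _).symm
    _ = ∑ i, μ i * ⟪e i, u⟫ ^ 2 := by
      refine Finset.sum_congr rfl fun i _ => ?_
      rw [hT, hT.apply_eigenvectorBasis, RCLike.ofReal_real_eq_id, id_eq, real_inner_smul_right,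
        real_inner_comm]
      ring
    _ ≤ ∑ i, c * ⟪e i, u⟫ ^ 2 := Finset.sum_le_sum fun i _ => hcoord i
    _ = c * ‖u‖ ^ 2 := by rw [← Finset.mul_sum, e.sum_sq_inner_right]

namespace LinearMap

variable {E F : Type*} [AddCommGroup E] [Module ℝ E] [NormedAddCommGroup F]
  [InnerProductSpace ℝ F]

lemma exists_apply_add_mem_orthogonal_range (A : E →ₗ[ℝ] F) (v : F)
    [(range A).HasOrthogonalProjection] : ∃ x₀, A x₀ + v ∈ (range A)ᗮ := by
  obtain ⟨x₀, hx₀⟩ := mem_range.1 ((range A).starProjection_apply_mem (-v))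
  refine ⟨x₀, ?_⟩
  have := neg_mem ((range A).sub_starProjection_mem_orthogonal (-v))
  rwa [← hx₀, neg_sub, sub_neg_eq_add] at this

variable {A : E →ₗ[ℝ] F} {v : F} {x₀ : E}

lemma norm_apply_add_sq_of_mem_orthogonal_range (hx₀ : A x₀ + v ∈ (range A)ᗮ) (y : E) :
    ‖A y + v‖ ^ 2 = ‖A (y - x₀)‖ ^ 2 + ‖A x₀ + v‖ ^ 2 := by
  have : A y + v = A (y - x₀) + (A x₀ + v) := by rw [map_sub]; abel
  rw [this, norm_add_sq_real, Submodule.inner_right_of_mem_orthogonal (mem_range_self A _) hx₀]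
  ring

lemma norm_apply_sub_le_of_mem_orthogonal_range (hx₀ : A x₀ + v ∈ (range A)ᗮ) (y : E) :
    ‖A (y - x₀)‖ ≤ ‖A y + v‖ := by
  have := norm_apply_add_sq_of_mem_orthogonal_range hx₀ y
  nlinarith [norm_nonneg (A (y - x₀)), norm_nonneg (A y + v), sq_nonneg ‖A x₀ + v‖]

lemma norm_apply_add_le_of_mem_orthogonal_range (hx₀ : A x₀ + v ∈ (range A)ᗮ) (y : E) :
    ‖A x₀ + v‖ ≤ ‖A y + v‖ := by
  have := norm_apply_add_sq_of_mem_orthogonal_range hx₀ y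
  nlinarith [norm_nonneg (A x₀ + v), norm_nonneg (A y + v), sq_nonneg ‖A (y - x₀)‖]

lemma setOf_norm_apply_add_eq_iInf (hx₀ : A x₀ + v ∈ (range A)ᗮ) :
    {y | ‖A y + v‖ = ⨅ z, ‖A z + v‖} = {y | A y = A x₀} := by
  have hinf : ⨅ z, ‖A z + v‖ = ‖A x₀ + v‖ :=
    le_antisymm (ciInf_le ⟨0, by rintro _ ⟨z, rfl⟩; positivity⟩ x₀)
      (le_ciInf (norm_apply_add_le_of_mem_orthogonal_range hx₀))
  ext y
  rw [Set.mem_ofPred_eq, Set.mem_ofPred_eq, hinf, ← sub_eq_zero (a := A y), ← map_sub,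
    ← norm_eq_zero, ← sq_eq_sq₀ (norm_nonneg _) (norm_nonneg _),
    norm_apply_add_sq_of_mem_orthogonal_range hx₀ y]
  constructor <;> intro h <;> nlinarith [sq_nonneg ‖A (y - x₀)‖]

end LinearMap

namespace LinearIsometry

variable {V : Type*} [NormedAddCommGroup V] [InnerProductSpace ℝ V] {σ : V →ₗᵢ[ℝ] V} {r : ℕ}

lemma apply_pow_pred_apply (hr : 1 ≤ r) (hσ : σ.toLinearMap ^ r = 1) (x : V) :
    σ ((σ.toLinearMap ^ (r - 1)) x) = x := by
  change (σ.toLinearMap * σ.toLinearMap ^ (r - 1)) x = x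
  rw [← pow_succ', Nat.sub_add_cancel hr, hσ, Module.End.one_apply]

lemma inner_map_left_eq_inner_pow_pred (hr : 1 ≤ r) (hσ : σ.toLinearMap ^ r = 1) (x y : V) :
    ⟪σ x, y⟫ = ⟪x, (σ.toLinearMap ^ (r - 1)) y⟫ := by
  conv_lhs => rw [← apply_pow_pred_apply hr hσ y]
  exact σ.inner_map_map x _

lemma inner_pow_pred_apply_left (hr : 1 ≤ r) (hσ : σ.toLinearMap ^ r = 1) (x y : V) :
    ⟪(σ.toLinearMap ^ (r - 1)) x, y⟫ = ⟪x, σ y⟫ := by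
  rw [real_inner_comm, ← inner_map_left_eq_inner_pow_pred hr hσ, real_inner_comm]

lemma isSymmetric_add_pow_pred (hr : 1 ≤ r) (hσ : σ.toLinearMap ^ r = 1) :
    (σ.toLinearMap + σ.toLinearMap ^ (r - 1)).IsSymmetric := fun x y => by
  simp only [LinearMap.add_apply, inner_add_left, inner_add_right, coe_toLinearMap,
    inner_map_left_eq_inner_pow_pred hr hσ, inner_pow_pred_apply_left hr hσ]
  ring

lemma inner_add_pow_pred_apply_self (hr : 1 ≤ r) (hσ : σ.toLinearMap ^ r = 1) (x : V) :
    ⟪(σ.toLinearMap + σ.toLinearMap ^ (r - 1)) x, x⟫ = 2 * ⟪σ x, x⟫ := by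
  simp only [LinearMap.add_apply, inner_add_left, coe_toLinearMap,
    inner_pow_pred_apply_left hr hσ, real_inner_comm x (σ x)]
  ring

lemma eigenvalue_eq_two_mul_inner (hr : 1 ≤ r) (hσ : σ.toLinearMap ^ r = 1) {w : V}
    (hw : ‖w‖ = 1) {μ : ℝ} (hμ : (σ.toLinearMap + σ.toLinearMap ^ (r - 1)) w = μ • w) :
    μ = 2 * ⟪σ w, w⟫ := by
  rw [← inner_add_pow_pred_apply_self hr hσ, hμ, real_inner_smul_left,
    real_inner_self_eq_norm_sq, hw, one_pow, mul_one]

lemma inner_pow_apply_self_eq_eval_T (hr : 1 ≤ r) (hσ : σ.toLinearMap ^ r = 1) {w : V}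
    (hw : ‖w‖ = 1) {μ : ℝ} (hμ : (σ.toLinearMap + σ.toLinearMap ^ (r - 1)) w = μ • w) (k : ℕ) :
    ⟪(σ.toLinearMap ^ k) w, w⟫ = (T ℝ k).eval ⟪σ w, w⟫ := by
  refine Polynomial.Chebyshev.eval_T_eq_of_recurrence (a := fun k => ⟪(σ.toLinearMap ^ k) w, w⟫)
    ?_ ?_ (fun k => ?_) k
  · rw [pow_zero, Module.End.one_apply, real_inner_self_eq_norm_sq, hw, one_pow]
  · rw [pow_one]; rfl
  have hrec : (σ.toLinearMap ^ (k + 2)) w =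
      μ • (σ.toLinearMap ^ (k + 1)) w - (σ.toLinearMap ^ k) w := by
    have := congr((σ.toLinearMap ^ (k + 1)) $hμ)
    rw [LinearMap.add_apply, map_add, map_smul, ← Module.End.mul_apply, ← Module.End.mul_apply,
      ← pow_succ, ← pow_add, show k + 1 + (r - 1) = k + r by omega, pow_add _ k r, hσ,
      mul_one] at this
    rw [eq_sub_iff_add_eq, ← this]
  simp only [hrec, inner_sub_left, real_inner_smul_left, eigenvalue_eq_two_mul_inner hr hσ hw hμ]

lemma eigenvalue_le_two_mul_cos (hr : 1 ≤ r) (hσ : σ.toLinearMap ^ r = 1) {w : V}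
    (hw : ‖w‖ = 1) (hσw : σ w ≠ w) {μ : ℝ}
    (hμ : (σ.toLinearMap + σ.toLinearMap ^ (r - 1)) w = μ • w) :
    μ ≤ 2 * cos (2 * π / r) := by
  have hc₁ : ⟪σ w, w⟫ < 1 := by
    refine lt_of_le_of_ne ?_ fun h =>
      hσw ((inner_eq_one_iff_of_norm_eq_one (by rw [σ.norm_map, hw]) hw).1 h)
    simpa [hw] using real_inner_le_norm (σ w) w
  have hc₀ : -1 ≤ ⟪σ w, w⟫ := by
    simpa [hw] using neg_le_of_abs_le (abs_real_inner_le_norm (σ w) w)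
  have hT : (T ℝ r).eval ⟪σ w, w⟫ = 1 := by
    rw [← inner_pow_apply_self_eq_eval_T hr hσ hw hμ, hσ, Module.End.one_apply,
      real_inner_self_eq_norm_sq, hw, one_pow]
  rw [eigenvalue_eq_two_mul_inner hr hσ hw hμ]
  linarith [Polynomial.Chebyshev.le_cos_two_pi_div_of_eval_T_eq_one hr ⟨hc₀, hc₁⟩ hT]

variable [FiniteDimensional ℝ V]

lemma inner_map_self_le_of_mem_orthogonal_ker (hr : 1 ≤ r) (hσ : σ.toLinearMap ^ r = 1) {u : V}
    (hu : u ∈ (LinearMap.ker (σ.toLinearMap - 1))ᗮ) : ⟪σ u, u⟫ ≤ cos (2 * π / r) * ‖u‖ ^ 2 := by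
  have := (isSymmetric_add_pow_pred hr hσ).inner_apply_self_le_of_mem_orthogonal
    (fun μ w hw hwK hμ => eigenvalue_le_two_mul_cos hr hσ hw
      (fun h => hwK (by simp [h])) hμ) hu
  rw [inner_add_pow_pred_apply_self hr hσ] at this
  linarith

lemma two_mul_sin_pi_div_mul_norm_le_norm_sub (hr : 1 ≤ r) (hσ : σ.toLinearMap ^ r = 1) {u : V}
    (hu : u ∈ (LinearMap.ker (σ.toLinearMap - 1))ᗮ) : 2 * sin (π / r) * ‖u‖ ≤ ‖σ u - u‖ := by
  have hsq : (2 * sin (π / r) * ‖u‖) ^ 2 ≤ ‖σ u - u‖ ^ 2 := by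
    have h := inner_map_self_le_of_mem_orthogonal_ker hr hσ hu
    rw [norm_sub_sq_real, σ.norm_map, show 2 * π / r = 2 * (π / r) by ring, cos_two_mul] at *
    nlinarith [sin_sq_add_cos_sq (π / r)]
  exact le_of_pow_le_pow_left₀ two_ne_zero (norm_nonneg _) hsq

end LinearIsometry

/-- Let `F x = σ x + v` be an affine isometry of a finite-dimensional real
inner product space whose linear part `σ` satisfies `σ ^ r = 1` for some
`r ≥ 1`.  Then `Min F` is nonempty and
`dist x (F x) ≥ 2 * sin (π / r) * dist (x, Min F)` for every `x`. -/
theorem displacement_lower_bound_of_finite_order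
    {V : Type*} [NormedAddCommGroup V] [InnerProductSpace ℝ V]
    [FiniteDimensional ℝ V]
    (σ : V →ₗᵢ[ℝ] V) (r : ℕ) (hr : 1 ≤ r) (hσ : σ.toLinearMap ^ r = 1)
    (v : V) :
    {x : V | dist x (σ x + v) = ⨅ y : V, dist y (σ y + v)}.Nonempty ∧
    ∀ x : V, 2 * Real.sin (Real.pi / r) *
        Metric.infDist x {y : V | dist y (σ y + v) = ⨅ z : V, dist z (σ z + v)} ≤
      dist x (σ x + v) := by
  set A := σ.toLinearMap - 1
  have hdisp (y : V) : dist y (σ y + v) = ‖A y + v‖ := by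
    rw [dist_comm, dist_eq_norm, add_sub_right_comm]
    rfl
  obtain ⟨x₀, hx₀⟩ := A.exists_apply_add_mem_orthogonal_range v
  simp only [hdisp, LinearMap.setOf_norm_apply_add_eq_iInf hx₀]
  refine ⟨⟨x₀, rfl⟩, fun x => ?_⟩
  set u := (LinearMap.ker A)ᗮ.starProjection (x - x₀) with hu
  have hAu : A u = A (x - x₀) := by
    rw [hu, Submodule.starProjection_orthogonal_val, map_sub,
      LinearMap.mem_ker.1 ((LinearMap.ker A).starProjection_apply_mem _), sub_zero]
  have hsin : 0 ≤ 2 * sin (π / r) := mul_nonneg zero_le_two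
    (sin_nonneg_of_nonneg_of_le_pi (by positivity) (div_le_self pi_pos.le (by exact_mod_cast hr)))
  calc 2 * sin (π / r) * Metric.infDist x {y | A y = A x₀}
      ≤ 2 * sin (π / r) * ‖u‖ := by
        refine mul_le_mul_of_nonneg_left ?_ hsin
        refine (Metric.infDist_le_dist_of_mem (y := x - u) ?_).trans_eq ?_
        · simp [hAu]
        · rw [dist_eq_norm, sub_sub_cancel]
    _ ≤ ‖σ u - u‖ :=
      σ.two_mul_sin_pi_div_mul_norm_le_norm_sub hr hσ (Submodule.starProjection_apply_mem _ _)
    _ = ‖A (x - x₀)‖ := by rw [← hAu]; rfl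
    _ ≤ ‖A x + v‖ := LinearMap.norm_apply_sub_le_of_mem_orthogonal_range hx₀ x
end

section
/- Let V be a finite-dimensional real inner product space, let σ : V → V be a linear isometry, let r ≥ 1 be an integer with σ^r = id, let v ∈ V, and let F : V → V be the affine isometry F x = σ x + v. Set v₀ = (1/r) · Σ_{i=0}^{r−1} σ^i(v) (the average of the σ-orbit of v). Then min(F) = ‖v₀‖, and every x ∈ Min(F) satisfies F x − x = v₀. -/
/-!
Averaging the orbit of `v` under `σ` produces a `σ`-fixed vector `v₀` together with a point `w`
displaced by `F` exactly by `v₀`. Since `σ` is an isometry fixing `v₀`, every vector `σ u - u`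
is orthogonal to `v₀`, so writing `F y - y = (σ (y - w) - (y - w)) + v₀` gives
`‖F y - y‖² = ‖σ (y - w) - (y - w)‖² + ‖v₀‖²`. Hence `‖v₀‖` is the minimal displacement, attained
at `w`, and a point attains it only if its displacement is `v₀`.
-/

open Finset
open scoped RealInnerProductSpace

theorem sub_one_mul_sum_geom_sum {R : Type*} [Ring R] (x : R) (n : ℕ) :
    (x - 1) * ∑ i ∈ range n, ∑ j ∈ range i, x ^ j = ∑ i ∈ range n, x ^ i - n := by
  rw [mul_sum, sum_congr rfl fun i _ => mul_geom_sum x i, sum_sub_distrib, sum_const, card_range,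
    nsmul_one]

namespace Module.End

variable {K M : Type*} [DivisionRing K] [AddCommGroup M] [Module K M]

def orbitAverage (T : Module.End K M) (r : ℕ) (v : M) : M :=
  (r : K)⁻¹ • ∑ i ∈ range r, (T ^ i) v

theorem apply_orbitAverage {T : Module.End K M} {r : ℕ} (hT : T ^ r = 1) (v : M) :
    T (orbitAverage T r v) = orbitAverage T r v := by
  have h := congrArg (· v) (mul_geom_sum T r)
  simp only [hT, sub_self, mul_apply, LinearMap.sub_apply, one_apply, LinearMap.sum_apply,
    LinearMap.zero_apply, sub_eq_zero] at h
  rw [orbitAverage, map_smul, h]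

theorem exists_apply_add_sub_eq_orbitAverage [CharZero K] (T : Module.End K M) {r : ℕ}
    (hr : r ≠ 0) (v : M) : ∃ w, T w + v - w = orbitAverage T r v := by
  refine ⟨(r : K)⁻¹ • ∑ i ∈ range r, ∑ j ∈ range i, (T ^ j) v, ?_⟩
  have h := congrArg (· v) (sub_one_mul_sum_geom_sum T r)
  simp only [mul_apply, LinearMap.sub_apply, one_apply, LinearMap.sum_apply, natCast_apply] at h
  rw [map_smul, ← sub_add_eq_add_sub, ← smul_sub, h, orbitAverage, smul_sub,
    ← Nat.cast_smul_eq_nsmul K, smul_smul, inv_mul_cancel₀ (Nat.cast_ne_zero.mpr hr), one_smul,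
    sub_add_cancel]

end Module.End

namespace LinearIsometry

variable {V : Type*} [NormedAddCommGroup V] [InnerProductSpace ℝ V] (σ : V →ₗᵢ[ℝ] V)

theorem inner_map_sub_self_of_map_eq_self {u₀ : V} (hu₀ : σ u₀ = u₀) (u : V) :
    ⟪σ u - u, u₀⟫ = 0 := by
  conv_lhs => rw [inner_sub_left, ← hu₀, σ.inner_map_map, hu₀]
  exact sub_self _

variable {σ} {v v₀ w : V}

theorem map_add_sub_eq_map_sub_sub_add (hw : σ w + v - w = v₀) (y : V) :
    σ y + v - y = (σ (y - w) - (y - w)) + v₀ := by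
  rw [map_sub, ← hw]
  abel

theorem norm_map_add_sub_sq (hv₀ : σ v₀ = v₀) (hw : σ w + v - w = v₀) (y : V) :
    ‖σ y + v - y‖ ^ 2 = ‖σ (y - w) - (y - w)‖ ^ 2 + ‖v₀‖ ^ 2 := by
  rw [map_add_sub_eq_map_sub_sub_add hw, norm_add_sq_real,
    σ.inner_map_sub_self_of_map_eq_self hv₀]
  ring

theorem norm_le_dist_map_add (hv₀ : σ v₀ = v₀) (hw : σ w + v - w = v₀) (y : V) :
    ‖v₀‖ ≤ dist y (σ y + v) := by
  rw [dist_comm, dist_eq_norm, ← sq_le_sq₀ (norm_nonneg _) (norm_nonneg _),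
    norm_map_add_sub_sq hv₀ hw]
  exact le_add_of_nonneg_left (sq_nonneg _)

theorem iInf_dist_map_add_eq_norm (hv₀ : σ v₀ = v₀) (hw : σ w + v - w = v₀) :
    ⨅ y, dist y (σ y + v) = ‖v₀‖ := by
  refine le_antisymm ?_ (le_ciInf (norm_le_dist_map_add hv₀ hw))
  calc ⨅ y, dist y (σ y + v)
      ≤ dist w (σ w + v) := ciInf_le ⟨0, Set.forall_mem_range.2 fun _ => dist_nonneg⟩ w
    _ = ‖v₀‖ := by rw [dist_comm, dist_eq_norm, hw]

theorem map_add_sub_eq_of_dist_eq_norm (hv₀ : σ v₀ = v₀) (hw : σ w + v - w = v₀) {x : V}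
    (hx : dist x (σ x + v) = ‖v₀‖) : σ x + v - x = v₀ := by
  rw [dist_comm, dist_eq_norm] at hx
  have hfixed : ‖σ (x - w) - (x - w)‖ ^ 2 = 0 := by
    have := norm_map_add_sub_sq hv₀ hw x
    rw [hx] at this
    linarith
  rw [map_add_sub_eq_map_sub_sub_add hw, norm_eq_zero.mp (pow_eq_zero_iff two_ne_zero |>.mp hfixed), zero_add]

end LinearIsometry

theorem min_eq_norm_average_of_finite_order_general
    {V : Type*} [NormedAddCommGroup V] [InnerProductSpace ℝ V]
    (σ : V →ₗᵢ[ℝ] V) (r : ℕ) (hr : 1 ≤ r) (hσ : σ.toLinearMap ^ r = 1)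
    (v : V) (v₀ : V)
    (hv₀ : v₀ = (r : ℝ)⁻¹ • ∑ i ∈ Finset.range r, (σ.toLinearMap ^ i) v) :
    (⨅ y : V, dist y (σ y + v)) = ‖v₀‖ ∧
    ∀ x ∈ {y : V | dist y (σ y + v) = ⨅ z : V, dist z (σ z + v)},
      (σ x + v) - x = v₀ := by
  change v₀ = Module.End.orbitAverage σ.toLinearMap r v at hv₀
  have hfixed : σ v₀ = v₀ := hv₀ ▸ Module.End.apply_orbitAverage hσ v
  obtain ⟨w, hw⟩ := Module.End.exists_apply_add_sub_eq_orbitAverage σ.toLinearMap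
    (Nat.one_le_iff_ne_zero.mp hr) v
  rw [← hv₀] at hw
  have hmin := LinearIsometry.iInf_dist_map_add_eq_norm hfixed hw
  refine ⟨hmin, fun x hx => ?_⟩
  rw [Set.mem_ofPred_eq, hmin] at hx
  exact LinearIsometry.map_add_sub_eq_of_dist_eq_norm hfixed hw hx

/-- For the affine isometry `F x = σ x + v` of a finite-dimensional real inner
product space with `σ ^ r = 1`, `r ≥ 1`, let `v₀ = (1/r) • ∑_{i<r} σ^i v` be
the average of the `σ`-orbit of `v`.  Then `min F = ‖v₀‖` and every
`x ∈ Min F` satisfies `F x - x = v₀`. -/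
theorem min_eq_norm_average_of_finite_order
    {V : Type*} [NormedAddCommGroup V] [InnerProductSpace ℝ V]
    [FiniteDimensional ℝ V]
    (σ : V →ₗᵢ[ℝ] V) (r : ℕ) (hr : 1 ≤ r) (hσ : σ.toLinearMap ^ r = 1)
    (v : V) (v₀ : V)
    (hv₀ : v₀ = (r : ℝ)⁻¹ • ∑ i ∈ Finset.range r, (σ.toLinearMap ^ i) v) :
    (⨅ y : V, dist y (σ y + v)) = ‖v₀‖ ∧
    ∀ x ∈ {y : V | dist y (σ y + v) = ⨅ z : V, dist z (σ z + v)},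
      (σ x + v) - x = v₀ :=
  min_eq_norm_average_of_finite_order_general σ r hr hσ v v₀ hv₀
end

section
/- Let V be a real vector space, let s ≥ 1 be an integer, let G : V → V be a linear map with G^s = id, let w, u ∈ V, and define the affine map F : V → V by F x = G x + w. Set ν = (1/s) · Σ_{i=0}^{s−1} G^i(u) and Z = Σ_{i=0}^{s−1} ((s − 1 − 2i)/(2s)) · G^i(u). Then the translation x ↦ x + Z maps the set { x ∈ V : F x = x + u } bijectively onto the set { x ∈ V : F x = x + ν }. -/
/-!
The translation by `Z` works because `u - ν = Z - G Z`: translating by `Z` changes the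
displacement `F x - x` by exactly `G Z - Z`. With `d i = (s + 1 - 2 i) / (2 s)` one has
`Z = ∑_{i<s} d (i + 1) • G^i u` and `Z + ν = ∑_{i<s} d i • G^i u`, so applying `G` shifts the
weights by one index, and `G^s u = u` together with `d 0 - d s = 1` closes the telescope.
-/

open Finset

theorem Module.End.apply_sum_smul_pow_succ_add {R M : Type*} [CommSemiring R]
    [AddCommMonoid M] [Module R M] (G : Module.End R M) (d : ℕ → R) (n : ℕ) (u : M) :
    G (∑ i ∈ range n, d (i + 1) • (G ^ i) u) + d 0 • u =
      ∑ i ∈ range n, d i • (G ^ i) u + d n • (G ^ n) u := by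
  have hshift : G (∑ i ∈ range n, d (i + 1) • (G ^ i) u) =
      ∑ i ∈ range n, d (i + 1) • (G ^ (i + 1)) u := by
    simp only [map_sum, map_smul, pow_succ', Module.End.mul_apply]
  rw [hshift, ← sum_range_succ, sum_range_succ' _ n, pow_zero, Module.End.one_apply]

theorem Module.End.apply_add_eq_add_average_of_pow_eq_one {K V : Type*} [Field K] [CharZero K]
    [AddCommGroup V] [Module K V] {s : ℕ} (hs : s ≠ 0) {G : Module.End K V} (hG : G ^ s = 1)
    (u : V) :
    G (∑ i ∈ range s, (((s : K) - 1 - 2 * (i : K)) / (2 * (s : K))) • (G ^ i) u) + u =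
      ∑ i ∈ range s, (((s : K) - 1 - 2 * (i : K)) / (2 * (s : K))) • (G ^ i) u +
        (s : K)⁻¹ • ∑ i ∈ range s, (G ^ i) u := by
  set d : ℕ → K := fun i => ((s : K) + 1 - 2 * (i : K)) / (2 * (s : K))
  have hZ : ∀ i : ℕ, ((s : K) - 1 - 2 * (i : K)) / (2 * (s : K)) = d (i + 1) := fun i => by
    simp only [d]; push_cast; ring
  have hZν : ∀ i : ℕ, d (i + 1) + (s : K)⁻¹ = d i := fun i => by
    simp only [d]; push_cast; field_simp; ring
  have hends : d 0 = d s + 1 := by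
    simp only [d]; push_cast; field_simp; ring
  have htelescope := G.apply_sum_smul_pow_succ_add d s u
  rw [hG, Module.End.one_apply, hends, add_smul, one_smul, ← add_assoc, add_right_comm,
    add_left_inj] at htelescope
  simp only [hZ, smul_sum, ← sum_add_distrib, ← add_smul, hZν]
  exact htelescope

theorem bijOn_add_right_setOf_apply_add_eq {M F : Type*} [AddCommGroup M] [FunLike F M M]
    [AddMonoidHomClass F M M] (G : F) (w a b c : M) (hc : G c + a = c + b) :
    Set.BijOn (· + c) {x | G x + w = x + a} {x | G x + w = x + b} := by
  have hmem : ∀ x, G (x + c) + w = x + c + b ↔ G x + w = x + a := fun x => by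
    rw [add_assoc x c b, ← hc, map_add, add_right_comm, add_comm (G c) a, ← add_assoc,
      add_left_inj]
  refine ⟨fun x hx => (hmem x).2 hx, (add_left_injective c).injOn, fun y hy => ?_⟩
  refine ⟨y - c, (hmem _).1 ?_, sub_add_cancel y c⟩
  rwa [sub_add_cancel]

/-- Let `G` be a linear endomorphism of a real vector space with `G ^ s = 1`
(`s ≥ 1`), `w, u ∈ V`, and `F x = G x + w`.  With
`ν = (1/s) • ∑_{i<s} G^i u` and `Z = ∑_{i<s} ((s - 1 - 2i)/(2s)) • G^i u`,
the translation `x ↦ x + Z` maps `{x | F x = x + u}` bijectively onto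
`{x | F x = x + ν}`. -/
theorem translation_bijOn_fixed_sets
    {V : Type*} [AddCommGroup V] [Module ℝ V]
    (s : ℕ) (hs : 1 ≤ s) (G : V →ₗ[ℝ] V) (hG : G ^ s = 1) (w u : V)
    (ν Z : V)
    (hν : ν = (s : ℝ)⁻¹ • ∑ i ∈ Finset.range s, (G ^ i) u)
    (hZ : Z = ∑ i ∈ Finset.range s,
      (((s : ℝ) - 1 - 2 * (i : ℝ)) / (2 * (s : ℝ))) • (G ^ i) u) :
    Set.BijOn (fun x => x + Z) {x : V | G x + w = x + u}
      {x : V | G x + w = x + ν} := by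
  subst hν hZ
  exact bijOn_add_right_setOf_apply_add_eq G w _ _ _
    (Module.End.apply_add_eq_add_average_of_pow_eq_one (by omega) hG u)
end
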